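/- Let (W,S) be a Coxeter system and X ⊆ W. If X is convex in the left weak order and has a unique maximal element under the left weak order, then X is ascent-compatible. -/

import Mathlib

variable {B W : Type*} [Group W] {M : CoxeterMatrix B}

/-- Ascent-compatibility of a subset of a Coxeter group. -/
def CoxeterSystem.AscentCompatible (cs : CoxeterSystem M W) (X : Set W) : Prop :=
  ∀ u ∈ X, ∀ v ∈ X, ∀ s t : B,
    ¬ cs.IsLeftDescent u s → ¬ cs.IsLeftDescent v t →
    u⁻¹ * cs.simple s * u = v⁻¹ * cs.simple t * v →
    (cs.simple s * u ∈ X ↔ cs.simple t * v ∈ X)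

/-- The left weak order: `x ≤_L y` iff `Inv(x) ⊆ Inv(y)` (right inversion sets). -/
def CoxeterSystem.leftWeakLE (cs : CoxeterSystem M W) (x y : W) : Prop :=
  ∀ t : W, cs.IsRightInversion x t → cs.IsRightInversion y t

/-- A set `X` is convex in the left weak order if it contains every interval between
two of its elements. -/
def CoxeterSystem.ConvexInLeftWeakOrder (cs : CoxeterSystem M W) (X : Set W) : Prop :=
  ∀ x ∈ X, ∀ y ∈ X, ∀ z : W, cs.leftWeakLE x z → cs.leftWeakLE z y → z ∈ X

/-!
If `s` is a left ascent of `u`, then `Inv(s u) = Inv(u) ∪ {u⁻¹ s u}`. So for `u ∈ X` and `z` the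
maximum of `X`, `s u ≤_L z` iff `u⁻¹ s u ∈ Inv(z)`; as `u ≤_L s u`, convexity makes this equivalent
to `s u ∈ X`, a condition that depends only on the reflection `u⁻¹ s u`.

The description of `Inv(s u)` is the strong exchange property, which comes from Tits's reflection
cocycle `η : W → (W → ℤˣ)`, `η(w₁ w₂)(t) = η(w₁)(t) η(w₂)(w₁⁻¹ t w₁)`, with `η(w)(t) = -1` exactly
when `t` is a left inversion of `w`. It is obtained by lifting `s ↦ (-1 at s and 1 elsewhere, s)`
to `(W → ℤˣ) ⋊ W`: the relations `(s s')^m(s,s') = 1` survive because the left inversion sequence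
of that word runs twice through the same list of reflections.
-/

namespace CoxeterSystem

open List

open scoped Classical

variable (cs : CoxeterSystem M W)

local prefix:100 "s " => cs.simple
local prefix:100 "π " => cs.wordProd
local prefix:100 "lis " => cs.leftInvSeq

def conjArrow : W →* MulAut (W → ℤˣ) :=
  mulAutArrow.comp ConjAct.toConjAct.toMonoidHom

@[simp] theorem conjArrow_apply (w : W) (f : W → ℤˣ) (x : W) :
    conjArrow w f x = f (w⁻¹ * x * w) := by
  show f _ = _
  simp [ConjAct.smul_def]

noncomputable def signedSimple (i : B) : (W → ℤˣ) ⋊[conjArrow] W :=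
  ⟨Pi.mulSingle (s i) (-1), s i⟩

noncomputable def signedWordProd (ω : List B) : (W → ℤˣ) ⋊[conjArrow] W :=
  (ω.map cs.signedSimple).prod

theorem signedWordProd_cons (i : B) (ω : List B) :
    cs.signedWordProd (i :: ω) = cs.signedSimple i * cs.signedWordProd ω := by
  simp [signedWordProd]

theorem signedWordProd_right (ω : List B) : (cs.signedWordProd ω).right = π ω := by
  induction ω with
  | nil => rfl
  | cons i ω ih => simp [signedWordProd_cons, ih, signedSimple, wordProd_cons]

theorem count_leftInvSeq_cons (i : B) (ω : List B) (t : W) :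
    (lis (i :: ω)).count t = (lis ω).count (s i * t * s i) + if t = s i then 1 else 0 := by
  rw [leftInvSeq, count_cons,
    ← count_map_of_injective _ _ (MulAut.conj (s i)).injective (s i * t * s i)]
  by_cases h : t = s i <;> simp [h, mul_assoc, Ne.symm]

theorem signedWordProd_left (ω : List B) (t : W) :
    (cs.signedWordProd ω).left t = (-1) ^ (lis ω).count t := by
  induction ω generalizing t with
  | nil => rfl
  | cons i ω ih =>
    rw [signedWordProd_cons, SemidirectProduct.mul_left, Pi.mul_apply, conjArrow_apply,
      count_leftInvSeq_cons, pow_add]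
    by_cases h : t = s i <;> simp [signedSimple, ih, h, mul_comm]

theorem signedWordProd_alternatingWord (i j : B) (m : ℕ) :
    cs.signedWordProd (alternatingWord i j (2 * m)) =
      (cs.signedSimple i * cs.signedSimple j) ^ m := by
  induction m with
  | zero => rfl
  | succ m ih =>
    have : alternatingWord i j (2 * (m + 1)) = i :: j :: alternatingWord i j (2 * m) := by
      simp [show 2 * (m + 1) = 2 * m + 1 + 1 by ring, alternatingWord_succ']
    rw [this, signedWordProd_cons, signedWordProd_cons, ih, pow_succ', mul_assoc]

theorem leftInvSeq_alternatingWord (i j : B) (p : ℕ) :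
    lis (alternatingWord i j (2 * p)) = (range (2 * p)).map fun k ↦ s i * (s j * s i) ^ k := by
  refine ext_getElem (by simp) fun k hk _ ↦ ?_
  rw [getElem_leftInvSeq_alternatingWord, prod_alternatingWord_eq_mul_pow]
  · simp [show (2 * k + 1) / 2 = k by omega]
  · simpa using hk

theorem even_count_leftInvSeq_alternatingWord (i j : B) (t : W) :
    Even ((lis (alternatingWord i j (2 * M i j))).count t) := by
  rw [leftInvSeq_alternatingWord, two_mul, range_add, map_append, map_map]
  have : ((fun k ↦ s i * (s j * s i) ^ k) ∘ (M i j + ·)) = fun k ↦ s i * (s j * s i) ^ k := by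
    funext k
    simp [pow_add]
  rw [this, count_append]
  exact ⟨_, rfl⟩

theorem isLiftable_signedSimple : M.IsLiftable cs.signedSimple := fun i j ↦ by
  rw [← signedWordProd_alternatingWord]
  refine SemidirectProduct.ext (funext fun t ↦ ?_) ?_
  · rw [signedWordProd_left, (even_count_leftInvSeq_alternatingWord cs i j t).neg_one_pow]
    rfl
  · rw [signedWordProd_right, prod_alternatingWord_eq_mul_pow]
    simp

noncomputable def signedLift : W →* (W → ℤˣ) ⋊[conjArrow] W :=
  cs.lift ⟨cs.signedSimple, cs.isLiftable_signedSimple⟩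

theorem signedLift_wordProd (ω : List B) : cs.signedLift (π ω) = cs.signedWordProd ω := by
  rw [wordProd, map_list_prod, map_map, signedWordProd]
  congr 2
  funext i
  exact cs.lift_apply_simple cs.isLiftable_signedSimple i

theorem signedLift_right (w : W) : (cs.signedLift w).right = w := by
  obtain ⟨ω, rfl⟩ := cs.wordProd_surjective w
  rw [signedLift_wordProd, signedWordProd_right]

noncomputable def reflectionCocycle (w t : W) : ℤˣ := (cs.signedLift w).left t

theorem reflectionCocycle_wordProd (ω : List B) (t : W) :
    cs.reflectionCocycle (π ω) t = (-1) ^ (lis ω).count t := by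
  rw [reflectionCocycle, signedLift_wordProd, signedWordProd_left]

theorem reflectionCocycle_simple (i : B) (t : W) :
    cs.reflectionCocycle (s i) t = (Pi.mulSingle (s i) (-1) : W → ℤˣ) t := by
  rw [reflectionCocycle, signedLift, lift_apply_simple]
  rfl

theorem reflectionCocycle_mul (w₁ w₂ t : W) :
    cs.reflectionCocycle (w₁ * w₂) t =
      cs.reflectionCocycle w₁ t * cs.reflectionCocycle w₂ (w₁⁻¹ * t * w₁) := by
  rw [reflectionCocycle, map_mul, SemidirectProduct.mul_left, Pi.mul_apply, conjArrow_apply,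
    signedLift_right]
  rfl

theorem reflectionCocycle_inv (w t : W) :
    cs.reflectionCocycle w⁻¹ (w⁻¹ * t * w) = cs.reflectionCocycle w t := by
  have h := cs.reflectionCocycle_mul w w⁻¹ t
  rw [mul_inv_cancel, reflectionCocycle, map_one, SemidirectProduct.one_left] at h
  rw [← Int.units_inv_eq_self (cs.reflectionCocycle w t)]
  exact eq_inv_of_mul_eq_one_right h.symm

theorem isLeftInversion_of_reflectionCocycle_eq_neg_one {w t : W}
    (h : cs.reflectionCocycle w t = -1) : cs.IsLeftInversion w t := by
  obtain ⟨ω, hω, rfl⟩ := cs.exists_isReduced w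
  rw [reflectionCocycle_wordProd] at h
  refine cs.isLeftInversion_of_mem_leftInvSeq hω (count_pos_iff.1 (Nat.pos_of_ne_zero ?_))
  rintro h0
  simp [h0] at h

theorem reflectionCocycle_self {t : W} (ht : cs.IsReflection t) :
    cs.reflectionCocycle t t = -1 := by
  obtain ⟨w, i, rfl⟩ := ht
  set t := w * s i * w⁻¹
  have hw : w⁻¹ * t * w = s i := by simp only [t]; group
  have hws : (w * s i)⁻¹ * t * (w * s i) = s i := by
    rw [show (w * s i)⁻¹ * t * (w * s i) = (s i)⁻¹ * (w⁻¹ * t * w) * s i by group, hw]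
    group
  have hinv : cs.reflectionCocycle w⁻¹ (s i) = cs.reflectionCocycle w t := by
    rw [← hw, reflectionCocycle_inv]
  calc cs.reflectionCocycle t t
      = cs.reflectionCocycle w t * cs.reflectionCocycle (s i) (s i) *
          cs.reflectionCocycle w⁻¹ (s i) := by
        rw [reflectionCocycle_mul, reflectionCocycle_mul, hw, hws]
    _ = cs.reflectionCocycle w t * -1 * cs.reflectionCocycle w t := by
        rw [hinv, reflectionCocycle_simple, Pi.mulSingle_eq_same]
    _ = -1 := by rw [mul_right_comm, Int.units_mul_self, one_mul]

theorem reflectionCocycle_eq_neg_one_iff {w t : W} :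
    cs.reflectionCocycle w t = -1 ↔ cs.IsLeftInversion w t := by
  refine ⟨cs.isLeftInversion_of_reflectionCocycle_eq_neg_one, fun h ↦ ?_⟩
  have hfix : t⁻¹ * t * t = t := by group
  have hw : t * (t * w) = w := by rw [← mul_assoc, h.1.mul_self, one_mul]
  have hnot : cs.reflectionCocycle (t * w) t = 1 := by
    refine (Int.units_eq_one_or _).resolve_right fun h' ↦ ?_
    have := (cs.isLeftInversion_of_reflectionCocycle_eq_neg_one h').2
    rw [hw] at this
    exact absurd h.2 (by omega)
  rw [← hw, reflectionCocycle_mul, hfix, hnot, reflectionCocycle_self cs h.1, mul_one]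

theorem isLeftInversion_mul_iff {w₁ w₂ t : W} :
    cs.IsLeftInversion (w₁ * w₂) t ↔
      Xor (cs.IsLeftInversion w₁ t) (cs.IsLeftInversion w₂ (w₁⁻¹ * t * w₁)) := by
  simp only [← reflectionCocycle_eq_neg_one_iff, reflectionCocycle_mul]
  rcases Int.units_eq_one_or (cs.reflectionCocycle w₁ t) with h₁ | h₁ <;>
    rcases Int.units_eq_one_or (cs.reflectionCocycle w₂ (w₁⁻¹ * t * w₁)) with h₂ | h₂ <;>
      simp [h₁, h₂]

theorem isLeftInversion_simple_iff {i : B} {t : W} : cs.IsLeftInversion (s i) t ↔ t = s i := by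
  rw [← reflectionCocycle_eq_neg_one_iff, reflectionCocycle_simple]
  by_cases h : t = s i <;> simp [h]

theorem isRightInversion_simple_mul_iff {u r : W} {i : B} :
    cs.IsRightInversion (s i * u) r ↔ Xor (cs.IsRightInversion u r) (r = u⁻¹ * s i * u) := by
  rw [← isLeftInversion_inv_iff, mul_inv_rev, inv_simple, isLeftInversion_mul_iff,
    isLeftInversion_inv_iff, isLeftInversion_simple_iff, inv_inv, mul_inv_eq_iff_eq_mul,
    ← eq_inv_mul_iff_mul_eq, ← mul_assoc]

theorem not_isRightInversion_conj_simple {u : W} {i : B} (hi : ¬ cs.IsLeftDescent u i) :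
    ¬ cs.IsRightInversion u (u⁻¹ * s i * u) := by
  rintro ⟨-, h⟩
  rw [show u * (u⁻¹ * s i * u) = s i * u by group, cs.not_isLeftDescent_iff.1 hi] at h
  omega

theorem isRightInversion_simple_mul_iff_of_not_isLeftDescent {u r : W} {i : B}
    (hi : ¬ cs.IsLeftDescent u i) :
    cs.IsRightInversion (s i * u) r ↔ cs.IsRightInversion u r ∨ r = u⁻¹ * s i * u := by
  rw [isRightInversion_simple_mul_iff, xor_iff_or_and_not_and, and_iff_left]
  rintro ⟨hr, rfl⟩
  exact cs.not_isRightInversion_conj_simple hi hr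

theorem leftWeakLE_simple_mul {u : W} {i : B} (hi : ¬ cs.IsLeftDescent u i) :
    cs.leftWeakLE u (s i * u) :=
  fun _ hr ↦ (cs.isRightInversion_simple_mul_iff_of_not_isLeftDescent hi).2 (.inl hr)

theorem simple_mul_leftWeakLE_iff {u z : W} {i : B} (hi : ¬ cs.IsLeftDescent u i) :
    cs.leftWeakLE (s i * u) z ↔
      cs.leftWeakLE u z ∧ cs.IsRightInversion z (u⁻¹ * s i * u) := by
  simp only [leftWeakLE, isRightInversion_simple_mul_iff_of_not_isLeftDescent cs hi, or_imp,
    forall_and, forall_eq]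

theorem simple_mul_mem_iff_of_convex {X : Set W} (hX : cs.ConvexInLeftWeakOrder X) {z : W}
    (hz : z ∈ X) (hmax : ∀ x ∈ X, cs.leftWeakLE x z) {u : W} (hu : u ∈ X) {i : B}
    (hi : ¬ cs.IsLeftDescent u i) :
    s i * u ∈ X ↔ cs.IsRightInversion z (u⁻¹ * s i * u) := by
  refine ⟨fun h ↦ ((cs.simple_mul_leftWeakLE_iff hi).1 (hmax _ h)).2, fun h ↦ ?_⟩
  exact hX u hu z hz _ (cs.leftWeakLE_simple_mul hi)
    ((cs.simple_mul_leftWeakLE_iff hi).2 ⟨hmax u hu, h⟩)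

end CoxeterSystem

/-- If `X ⊆ W` is convex in the left weak order and has a unique maximal element under the left
weak order, then `X` is ascent-compatible. -/
theorem convex_with_max_ascentCompatible (cs : CoxeterSystem M W) (X : Set W)
    (hconv : cs.ConvexInLeftWeakOrder X)
    (hmax : ∃ z ∈ X, ∀ x ∈ X, cs.leftWeakLE x z) :
    cs.AscentCompatible X := by
  obtain ⟨z, hz, hle⟩ := hmax
  intro u hu v hv s t hs ht heq
  rw [cs.simple_mul_mem_iff_of_convex hconv hz hle hu hs,
    cs.simple_mul_mem_iff_of_convex hconv hz hle hv ht, heq]
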